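/- arXiv:2109.06721 — 8 statements merged into one kernel-verified Lean document; each statement's English description precedes it below -/
import Mathlib

section
/- Let F be a field, n a positive integer whose image in F is nonzero, ω ∈ F a primitive n-th root of unity, and e_0,…,e_{n−1} the rows of the Fourier matrix F_n, with indices read modulo n. Fix 1 ≤ r ≤ n, an integer a, and an integer k with gcd(k, n) = 1, and let A be the r×n matrix whose rows are e_a, e_{a+k}, e_{a+2k}, …, e_{a+(r−1)k} (an arithmetic sequence of rows with difference k). Then for every nonzero v ∈ F^r the codeword vA has Hamming weight at least n − r + 1; in particular the rows of A are linearly independent and the code generated by A is an MDS [n, r, n−r+1] code. -/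
/-!
Write `x_j = (ω^k)^j`. Since `gcd(k, n) = 1`, `ω^k` is again a primitive `n`-th root of unity, so
the points `x_0, …, x_{n-1}` are distinct. The `j`-th entry of `vA` is `ω^{aj} · Σ_s v_s x_j^s`,
a nonzero multiple of the value at `x_j` of a polynomial of degree `< r`. If `r` of these values
vanished, the corresponding `r × r` Vandermonde system would force `v = 0`; hence at most `r - 1`
entries of `vA` vanish.
-/

open Finset Function

theorem card_filter_sum_mul_pow_eq_zero_lt {R ι : Type*} [CommRing R] [IsDomain R]
    [DecidableEq R] [Fintype ι] {r : ℕ} {x : ι → R} (hx : Injective x) {f : Fin r → R}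
    (hf : f ≠ 0) : #{i | ∑ s, f s * x i ^ (s : ℕ) = 0} < r := by
  by_contra! h
  obtain ⟨e⟩ : Nonempty (Fin r ↪ {i // i ∈ ({i | ∑ s, f s * x i ^ (s : ℕ) = 0} : Finset ι)}) :=
    Function.Embedding.nonempty_of_card_le (by rwa [Fintype.card_fin, Fintype.card_coe])
  exact hf <| Matrix.eq_zero_of_forall_index_sum_mul_pow_eq_zero
    (hx.comp (Subtype.val_injective.comp e.injective)) fun j => (mem_filter.1 (e j).2).2

theorem card_lt_hammingNorm_sum_mul_pow_add {R ι : Type*} [CommRing R] [IsDomain R]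
    [DecidableEq R] [Fintype ι] {r : ℕ} {x : ι → R} (hx : Injective x) {f : Fin r → R}
    (hf : f ≠ 0) :
    Fintype.card ι < hammingNorm (fun i => ∑ s, f s * x i ^ (s : ℕ)) + r := by
  have hzeros := card_filter_sum_mul_pow_eq_zero_lt hx hf
  have hsplit := card_filter_add_card_filter_not (s := univ)
    (fun i => ∑ s, f s * x i ^ (s : ℕ) = 0)
  rw [card_univ] at hsplit
  simp only [hammingNorm, ne_eq]
  omega

theorem hammingNorm_mul_left_of_ne_zero {M₀ ι : Type*} [MulZeroClass M₀] [IsLeftCancelMulZero M₀]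
    [DecidableEq M₀] [Fintype ι] {c : ι → M₀} (hc : ∀ i, c i ≠ 0) (g : ι → M₀) :
    hammingNorm (fun i => c i * g i) = hammingNorm g :=
  hammingNorm_comp (fun i y => c i * y) (fun i => mul_right_injective₀ (hc i)) fun _ => mul_zero _

theorem vecMul_eq_mul_sum_mul_pow {F : Type*} [Field F] {n r : ℕ} {ω : F}
    (hω : IsPrimitiveRoot ω n) {a k : ℤ} {A : Matrix (Fin r) (Fin n) F}
    (hA : ∀ (s : Fin r) (j : Fin n), A s j = ω ^ ((a + (s.val : ℤ) * k) * (j.val : ℤ)))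
    (v : Fin r → F) :
    Matrix.vecMul v A =
      fun j => ω ^ (a * (j.val : ℤ)) * ∑ s, v s * ((ω ^ k) ^ j.val) ^ s.val := by
  funext j
  have hω0 : ω ≠ 0 := hω.ne_zero j.pos.ne'
  simp only [Matrix.vecMul, dotProduct, mul_sum, hA]
  refine sum_congr rfl fun s _ => ?_
  rw [← zpow_natCast, ← zpow_natCast, ← zpow_mul, ← zpow_mul,
    show (a + (s.val : ℤ) * k) * j.val = a * j.val + k * (j.val * s.val) by ring, zpow_add₀ hω0]
  ring

theorem stmt5_general (F : Type*) [Field F] [DecidableEq F] (n r : ℕ)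
    (ω : F) (hω : IsPrimitiveRoot ω n)
    (hrn : r ≤ n) (a k : ℤ) (hk : Int.gcd k n = 1)
    (A : Matrix (Fin r) (Fin n) F)
    (hA : ∀ (s : Fin r) (j : Fin n),
      A s j = ω ^ ((a + (s.val : ℤ) * k) * (j.val : ℤ))) :
    (∀ v : Fin r → F, v ≠ 0 → n - r + 1 ≤ hammingNorm (Matrix.vecMul v A)) ∧
      LinearIndependent F (fun s : Fin r => A s) := by
  have hx : Injective fun j : Fin n => (ω ^ k) ^ j.val :=
    fun i j h => Fin.ext ((hω.zpow_of_gcd_eq_one k hk).pow_inj i.2 j.2 h)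
  have weight : ∀ v : Fin r → F, v ≠ 0 → n - r + 1 ≤ hammingNorm (Matrix.vecMul v A) := by
    intro v hv
    have := card_lt_hammingNorm_sum_mul_pow_add hx hv
    rw [Fintype.card_fin] at this
    rw [vecMul_eq_mul_sum_mul_pow hω hA,
      hammingNorm_mul_left_of_ne_zero fun j => zpow_ne_zero _ (hω.ne_zero j.pos.ne')]
    omega
  refine ⟨weight, ?_⟩
  rw [← A.row_def, ← Matrix.vecMul_injective_iff, ← Matrix.coe_vecMulLinear]
  refine (injective_iff_map_eq_zero A.vecMulLinear).2 fun v hv => ?_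
  by_contra hv0
  have := weight v hv0
  rw [← A.vecMulLinear_apply, hv, hammingNorm_zero] at this
  omega

/-- Take `r` rows of the Fourier matrix in arithmetic progression `e_a, e_{a+k}, …,
e_{a+(r-1)k}` (indices mod `n`) with `gcd(k,n) = 1`. Every nonzero combination of these
rows has Hamming weight at least `n - r + 1`; in particular the rows are linearly
independent and generate an MDS `[n, r, n-r+1]` code. -/
theorem stmt5 (F : Type*) [Field F] [DecidableEq F] (n r : ℕ) (hn : 0 < n)
    (hchar : (n : F) ≠ 0) (ω : F) (hω : IsPrimitiveRoot ω n)
    (hr : 1 ≤ r) (hrn : r ≤ n) (a k : ℤ) (hk : Int.gcd k n = 1)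
    (A : Matrix (Fin r) (Fin n) F)
    (hA : ∀ (s : Fin r) (j : Fin n),
      A s j = ω ^ ((a + (s.val : ℤ) * k) * (j.val : ℤ))) :
    (∀ v : Fin r → F, v ≠ 0 → n - r + 1 ≤ hammingNorm (Matrix.vecMul v A)) ∧
      LinearIndependent F (fun s : Fin r => A s) :=
  stmt5_general F n r ω hω hrn a k hk A hA
end

section
/- Let F be a field, n a positive integer whose image in F is nonzero, ω ∈ F a primitive n-th root of unity, and e_0,…,e_{n−1} the rows of the Fourier matrix F_n. Let r > ⌊n/2⌋ and let C be the code spanned by the rows e_0, e_1, …, e_{r−1}. Then C contains its Euclidean dual: every x ∈ F^n satisfying Σ_{k=0}^{n−1} x_k c_k = 0 for all c ∈ C lies in C. Hence C is a dual-containing MDS [n, r, n−r+1] code. -/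
/-!
Fourier inversion gives `n • x = ∑ⱼ ⟪x, e_j⟫ • e_{n-j}` (where `e_{n-j} = e_{-j}` since
`ωⁿ = 1`). If `x` is orthogonal to `C`, the terms with `j < r` vanish, and for `r ≤ j < n`
the condition `n < 2r` gives `n - j < r`, so `e_{n-j} ∈ C`. Hence `x ∈ C`.
-/

open Matrix

section Fourier

variable {F : Type*} [Field F] {n : ℕ} {ω : F}

def fourierRow (ω : F) (n i : ℕ) : Fin n → F := fun k => ω ^ (i * k)

theorem sum_pow_eq_zero_of_pow_eq_one {R : Type*} [Ring R] [NoZeroDivisors R] {ζ : R}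
    (hζn : ζ ^ n = 1) (hζ : ζ ≠ 1) :
    ∑ j : Fin n, ζ ^ (j : ℕ) = 0 := by
  have hgeom : (∑ j : Fin n, ζ ^ (j : ℕ)) * (ζ - 1) = 0 := by
    rw [Fin.sum_univ_eq_sum_range (ζ ^ ·), geom_sum_mul, hζn, sub_self]
  exact (mul_eq_zero.mp hgeom).resolve_right (sub_ne_zero.mpr hζ)

theorem IsPrimitiveRoot.sum_pow_mul_inv_pow (hω : IsPrimitiveRoot ω n) (k m : Fin n) :
    ∑ j : Fin n, ω ^ (j * k : ℕ) * ω⁻¹ ^ (j * m : ℕ) = if k = m then (n : F) else 0 := by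
  have hω0 : ω ≠ 0 := hω.ne_zero k.pos.ne'
  set ζ := ω ^ (k : ℕ) * ω⁻¹ ^ (m : ℕ) with hζ_def
  have hsummand (j : Fin n) : ω ^ (j * k : ℕ) * ω⁻¹ ^ (j * m : ℕ) = ζ ^ (j : ℕ) := by
    rw [mul_pow, ← pow_mul, ← pow_mul, mul_comm (k : ℕ), mul_comm (m : ℕ)]
  simp only [hsummand]
  split_ifs with hkm
  · simp [ζ, hkm, hω0]
  · refine sum_pow_eq_zero_of_pow_eq_one ?_ fun hζ => hkm (Fin.ext (hω.pow_inj k.isLt m.isLt ?_))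
    · rw [mul_pow, pow_right_comm ω, pow_right_comm ω⁻¹, inv_pow ω n, hω.pow_eq_one]
      simp
    · rwa [hζ_def, inv_pow, mul_inv_eq_one₀ (pow_ne_zero _ hω0)] at hζ

theorem IsPrimitiveRoot.fourierRow_sub (hω : IsPrimitiveRoot ω n) {j : ℕ} (hj : j ≤ n)
    (m : Fin n) :
    fourierRow ω n (n - j) m = ω⁻¹ ^ (j * m : ℕ) := by
  rw [inv_pow]
  refine eq_inv_of_mul_eq_one_left ?_
  rw [fourierRow, ← pow_add, ← add_mul, Nat.sub_add_cancel hj, pow_mul, hω.pow_eq_one, one_pow]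

theorem IsPrimitiveRoot.sum_dotProduct_fourierRow_smul (hω : IsPrimitiveRoot ω n)
    (x : Fin n → F) :
    ∑ j : Fin n, (x ⬝ᵥ fourierRow ω n j) • fourierRow ω n (n - j) = (n : F) • x := by
  ext m
  have hrow (j : Fin n) := hω.fourierRow_sub j.isLt.le m
  calc (∑ j : Fin n, (x ⬝ᵥ fourierRow ω n j) • fourierRow ω n (n - j)) m
      = ∑ k, x k * ∑ j : Fin n, ω ^ (j * k : ℕ) * ω⁻¹ ^ (j * m : ℕ) := by
        simp only [Finset.sum_apply, Pi.smul_apply, smul_eq_mul, hrow]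
        simp only [dotProduct, fourierRow, Finset.sum_mul, Finset.mul_sum, mul_assoc]
        exact Finset.sum_comm
    _ = ((n : F) • x) m := by
        simp only [hω.sum_pow_mul_inv_pow, mul_ite, mul_zero, Finset.sum_ite_eq', Finset.mem_univ,
          if_true, Pi.smul_apply, smul_eq_mul]
        exact mul_comm _ _

theorem IsPrimitiveRoot.mem_of_forall_dotProduct_eq_zero (hω : IsPrimitiveRoot ω n)
    (hn : (n : F) ≠ 0) {C : Submodule F (Fin n → F)}
    (hrows : ∀ j : Fin n, fourierRow ω n j ∈ C ∨ fourierRow ω n (n - j) ∈ C)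
    {x : Fin n → F} (hx : ∀ c ∈ C, x ⬝ᵥ c = 0) : x ∈ C := by
  rw [← inv_smul_smul₀ hn x, ← hω.sum_dotProduct_fourierRow_smul]
  refine C.smul_mem _ (C.sum_mem fun j _ => ?_)
  rcases hrows j with hj | hj
  · rw [hx _ hj, zero_smul]
    exact C.zero_mem
  · exact C.smul_mem _ hj

end Fourier

theorem stmt6_general (F : Type*) [Field F] (n r : ℕ) (hchar : (n : F) ≠ 0)
    (ω : F) (hω : IsPrimitiveRoot ω n) (hr : n / 2 < r)
    (C : Submodule F (Fin n → F))
    (hC : C = Submodule.span F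
      (Set.range fun i : Fin r => fun j : Fin n => ω ^ (i.val * j.val))) :
    ∀ x : Fin n → F, (∀ c ∈ C, ∑ k : Fin n, x k * c k = 0) → x ∈ C := by
  intro x hx
  refine hω.mem_of_forall_dotProduct_eq_zero hchar (fun j => ?_) hx
  subst hC
  by_cases hj : (j : ℕ) < r
  · exact .inl (Submodule.subset_span ⟨⟨j, hj⟩, rfl⟩)
  · exact .inr (Submodule.subset_span ⟨⟨n - j, by omega⟩, rfl⟩)

/-- For `r > ⌊n/2⌋`, the code spanned by the first `r` rows of the Fourier matrix
contains its Euclidean dual: any `x` orthogonal to every codeword lies in the code. -/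
theorem stmt6 (F : Type*) [Field F] (n r : ℕ) (hn : 0 < n) (hchar : (n : F) ≠ 0)
    (ω : F) (hω : IsPrimitiveRoot ω n) (hr : n / 2 < r) (hrn : r ≤ n)
    (C : Submodule F (Fin n → F))
    (hC : C = Submodule.span F
      (Set.range fun i : Fin r => fun j : Fin n => ω ^ (i.val * j.val))) :
    ∀ x : Fin n → F, (∀ c ∈ C, ∑ k : Fin n, x k * c k = 0) → x ∈ C :=
  stmt6_general F n r hchar ω hω hr C hC
end

section
/- Let F be a field, n a positive integer whose image in F is nonzero, ω ∈ F a primitive n-th root of unity, and e_0,…,e_{n−1} the rows of the Fourier matrix F_n. Let r be a positive integer with 2r < n and let C be the code spanned by the 2r+1 rows e_0, e_1, e_{n−1}, e_2, e_{n−2}, …, e_r, e_{n−r}. Then C ∩ C^⊥ = 0 (C is a linear complementary dual code), and every nonzero codeword of C has Hamming weight at least n − 2r; in particular C is an LCD MDS [n, 2r+1, n−2r] code. -/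
/-!
Listing the rows by their exponents `0, ±1, …, ±r`, the Gram matrix of the generator matrix `A`
has entries `∑ₖ ω^{(a + b) k}`, which equal `n` when `a + b ≡ 0 (mod n)` and vanish otherwise.
So `A Aᵀ` is `n` times the permutation matrix of the involution pairing `e_a` with `e_{-a}`,
hence invertible, which forces `C ∩ C^⊥ = 0`. For the weight bound, multiplying the `j`-th
coordinate of a codeword `∑ₛ vₛ e_{aₛ}` by `ω^{r j}` shifts the exponents into `[0, 2r]`, so the
coordinate becomes `P(ω^j)` for a nonzero polynomial `P` of degree at most `2r`; as the `ω^j` are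
distinct, at most `2r` coordinates vanish.
-/

section

open Finset Polynomial Matrix

theorem Nat.dvd_add_iff_of_lt {n a b : ℕ} (ha : a < n) (hb : b < n) :
    n ∣ a + b ↔ a + b = 0 ∨ a + b = n := by
  refine ⟨fun ⟨k, hk⟩ => ?_, by rintro (h | h) <;> simp [h]⟩
  have : k < 2 := by nlinarith
  interval_cases k <;> omega

theorem IsPrimitiveRoot.sum_pow_mul {R : Type*} [CommRing R] [IsDomain R] {ω : R} {n : ℕ}
    (hω : IsPrimitiveRoot ω n) (c : ℕ) :
    ∑ k : Fin n, ω ^ (c * k) = if n ∣ c then (n : R) else 0 := by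
  simp_rw [pow_mul]
  rw [Fin.sum_univ_eq_sum_range (fun k => (ω ^ c) ^ k)]
  split_ifs with h
  · simp [(hω.pow_eq_one_iff_dvd c).mpr h]
  · have hne : ω ^ c - 1 ≠ 0 := sub_ne_zero.mpr (mt (hω.pow_eq_one_iff_dvd c).mp h)
    have hgeom := geom_sum_mul (ω ^ c) n
    rw [← pow_mul, mul_comm c n, pow_mul, hω.pow_eq_one, one_pow, sub_self] at hgeom
    exact (mul_eq_zero.mp hgeom).resolve_right hne

theorem Polynomial.coeff_sum_C_mul_X_pow_of_injective {R ι : Type*} [Semiring R] [Fintype ι]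
    {e : ι → ℕ} (he : Function.Injective e) (v : ι → R) (i : ι) :
    (∑ s, C (v s) * X ^ e s).coeff (e i) = v i := by
  rw [finsetSum_coeff, sum_eq_single i (fun s _ hs => by simp [he.ne hs.symm]) (by simp)]
  simp

theorem IsPrimitiveRoot.card_filter_eval_pow_eq_zero_le {R : Type*} [CommRing R] [IsDomain R]
    [DecidableEq R] {ω : R} {n : ℕ} (hω : IsPrimitiveRoot ω n) {P : R[X]} (hP : P ≠ 0) :
    #{j : Fin n | P.eval (ω ^ (j : ℕ)) = 0} ≤ P.natDegree := by
  calc #{j : Fin n | P.eval (ω ^ (j : ℕ)) = 0} ≤ P.roots.toFinset.card := by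
        refine card_le_card_of_injOn (fun j : Fin n => ω ^ (j : ℕ)) ?_ ?_
        · intro j hj
          simp_all [mem_roots']
        · intro a _ b _ hab
          exact Fin.ext (hω.pow_inj a.isLt b.isLt hab)
    _ ≤ P.natDegree := (Multiset.toFinset_card_le _).trans (card_roots' P)

theorem IsPrimitiveRoot.sub_natDegree_le_hammingNorm {R : Type*} [CommRing R] [IsDomain R]
    [DecidableEq R] {ω : R} {n : ℕ} (hω : IsPrimitiveRoot ω n) {P : R[X]} (hP : P ≠ 0)
    (x : Fin n → R) (hx : ∀ j : Fin n, x j = 0 → P.eval (ω ^ (j : ℕ)) = 0) :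
    n - P.natDegree ≤ hammingNorm x := by
  have hzeros : #{j | x j = 0} ≤ P.natDegree :=
    (card_le_card fun j => by simpa using hx j).trans (hω.card_filter_eval_pow_eq_zero_le hP)
  have hsplit := card_filter_add_card_filter_not (s := (univ : Finset (Fin n))) (x · = 0)
  rw [card_univ, Fintype.card_fin] at hsplit
  have hweight : hammingNorm x = #{j | ¬x j = 0} := rfl
  omega

theorem eq_zero_of_mem_span_rows_of_isUnit_mul_transpose {K ι κ : Type*} [Field K] [Fintype ι]
    [DecidableEq ι] [Fintype κ] {A : Matrix ι κ K} (hA : IsUnit (A * Aᵀ)) {x : κ → K}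
    (hx : x ∈ Submodule.span K (Set.range A)) (horth : ∀ i, x ⬝ᵥ A i = 0) : x = 0 := by
  obtain ⟨v, rfl⟩ := (Submodule.mem_span_range_iff_exists_fun K).mp hx
  rw [← vecMul_eq_sum] at horth ⊢
  have hgram : (A * Aᵀ) *ᵥ v = (A * Aᵀ) *ᵥ 0 := by
    ext i
    rw [← mulVec_mulVec, mulVec_transpose, mulVec_zero, mulVec, dotProduct_comm]
    exact horth i
  simp [mulVec_injective_iff_isUnit.mpr hA hgram]

/-- The `s`-th spanning row is `e_{fourierRowExp n s}`: the exponents are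
`0, 1, n - 1, 2, n - 2, …`. -/
def fourierRowExp (n s : ℕ) : ℕ :=
  if s = 0 then 0 else if s % 2 = 1 then (s + 1) / 2 else n - s / 2

def fourierRowPartner (s : ℕ) : ℕ :=
  if s = 0 then 0 else if s % 2 = 1 then s + 1 else s - 1

def fourierRowShift (r s : ℕ) : ℕ :=
  if s % 2 = 1 then r + (s + 1) / 2 else r - s / 2

section IndexArithmetic

variable {n r s t : ℕ}

theorem fourierRowExp_lt (h2r : 2 * r < n) (hs : s ≤ 2 * r) : fourierRowExp n s < n := by
  unfold fourierRowExp; split_ifs <;> omega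

theorem dvd_fourierRowExp_add_iff (h2r : 2 * r < n) (hs : s ≤ 2 * r) (ht : t ≤ 2 * r) :
    n ∣ fourierRowExp n s + fourierRowExp n t ↔ t = fourierRowPartner s := by
  rw [Nat.dvd_add_iff_of_lt (fourierRowExp_lt h2r hs) (fourierRowExp_lt h2r ht)]
  unfold fourierRowExp fourierRowPartner; split_ifs <;> omega

theorem fourierRowPartner_involutive : Function.Involutive fourierRowPartner := by
  intro s; unfold fourierRowPartner; split_ifs <;> grind

theorem fourierRowPartner_le (hs : s ≤ 2 * r) : fourierRowPartner s ≤ 2 * r := by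
  unfold fourierRowPartner; split_ifs <;> omega

theorem fourierRowShift_le (hs : s ≤ 2 * r) : fourierRowShift r s ≤ 2 * r := by
  unfold fourierRowShift; split_ifs <;> omega

theorem fourierRowExp_add_mod (h2r : 2 * r < n) (hs : s ≤ 2 * r) :
    (fourierRowExp n s + r) % n = fourierRowShift r s := by
  have hlt : fourierRowShift r s < n := (fourierRowShift_le hs).trans_lt h2r
  have h : fourierRowExp n s + r = fourierRowShift r s ∨
      fourierRowExp n s + r = fourierRowShift r s + n := by
    unfold fourierRowExp fourierRowShift; split_ifs <;> omega
  rcases h with h | h <;> simp [h, Nat.mod_eq_of_lt hlt]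

theorem fourierRowShift_injective :
    Function.Injective (fun s : Fin (2 * r + 1) => fourierRowShift r s) := by
  intro s t h
  have := s.isLt; have := t.isLt
  simp only [fourierRowShift] at h
  ext; split_ifs at h <;> omega

end IndexArithmetic

variable {F : Type*} [Field F] {ω : F} {n r : ℕ}

def fourierRows (ω : F) (n r : ℕ) : Matrix (Fin (2 * r + 1)) (Fin n) F :=
  Matrix.of fun s j => ω ^ (fourierRowExp n s * j)

def fourierRowPartnerPerm (r : ℕ) : Equiv.Perm (Fin (2 * r + 1)) :=
  Function.Involutive.toPerm
    (fun s => ⟨fourierRowPartner s, Nat.lt_succ_of_le (fourierRowPartner_le s.is_le)⟩)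
    (fun s => Fin.ext (fourierRowPartner_involutive s))

@[simp]
theorem fourierRowPartnerPerm_apply_val (s : Fin (2 * r + 1)) :
    (fourierRowPartnerPerm r s : ℕ) = fourierRowPartner s :=
  rfl

theorem fourierRows_mul_transpose (hω : IsPrimitiveRoot ω n) (h2r : 2 * r < n) :
    fourierRows ω n r * (fourierRows ω n r)ᵀ =
      (n : F) • (fourierRowPartnerPerm r).permMatrix F := by
  ext s t
  have hs := s.is_le
  have ht := t.is_le
  simp only [mul_apply, transpose_apply, fourierRows, of_apply, ← pow_add, ← add_mul,
    hω.sum_pow_mul, dvd_fourierRowExp_add_iff h2r hs ht]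
  simp [PEquiv.toMatrix_apply, Fin.ext_iff, eq_comm]

theorem isUnit_fourierRows_mul_transpose (hn : (n : F) ≠ 0) (hω : IsPrimitiveRoot ω n)
    (h2r : 2 * r < n) : IsUnit (fourierRows ω n r * (fourierRows ω n r)ᵀ) := by
  rw [fourierRows_mul_transpose hω h2r, isUnit_iff_isUnit_det]
  rcases Int.units_eq_one_or (Equiv.Perm.sign (fourierRowPartnerPerm r)) with h | h <;>
    simp [h, hn]

theorem pow_mul_vecMul_fourierRows (hω : IsPrimitiveRoot ω n) (h2r : 2 * r < n)
    (v : Fin (2 * r + 1) → F) (j : Fin n) :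
    ω ^ (r * j) * (v ᵥ* fourierRows ω n r) j =
      (∑ s, C (v s) * X ^ fourierRowShift r s).eval (ω ^ (j : ℕ)) := by
  simp only [vecMul, dotProduct, fourierRows, of_apply, mul_sum, eval_finsetSum, eval_mul,
    eval_C, eval_pow, eval_X]
  refine sum_congr rfl fun s _ => ?_
  have hshift : ω ^ (fourierRowExp n s + r) = ω ^ fourierRowShift r s := by
    rw [← fourierRowExp_add_mod h2r s.is_le, hω.eq_orderOf, pow_mod_orderOf]
  calc ω ^ (r * j) * (v s * ω ^ (fourierRowExp n s * j))
      = v s * (ω ^ (fourierRowExp n s + r)) ^ (j : ℕ) := by ring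
    _ = v s * (ω ^ (j : ℕ)) ^ fourierRowShift r s := by
      rw [hshift, ← pow_mul, ← pow_mul, mul_comm (j : ℕ)]

theorem le_hammingNorm_vecMul_fourierRows [DecidableEq F] (hω : IsPrimitiveRoot ω n)
    (h2r : 2 * r < n) {v : Fin (2 * r + 1) → F} (hv : v ≠ 0) :
    n - 2 * r ≤ hammingNorm (v ᵥ* fourierRows ω n r) := by
  set P : F[X] := ∑ s, C (v s) * X ^ fourierRowShift r s with hP
  have hP0 : P ≠ 0 := by
    obtain ⟨s, hs⟩ := Function.ne_iff.mp hv
    intro h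
    apply hs
    rw [← coeff_sum_C_mul_X_pow_of_injective fourierRowShift_injective v s, ← hP, h,
      coeff_zero, Pi.zero_apply]
  have hdeg : P.natDegree ≤ 2 * r := natDegree_sum_le_of_forall_le _ _ fun s _ =>
    (natDegree_C_mul_X_pow_le _ _).trans (fourierRowShift_le s.is_le)
  refine (Nat.sub_le_sub_left hdeg n).trans
    (hω.sub_natDegree_le_hammingNorm hP0 _ fun j hj => ?_)
  rw [← pow_mul_vecMul_fourierRows hω h2r, hj, mul_zero]

end

theorem stmt8_general (F : Type*) [Field F] [DecidableEq F] (n r : ℕ)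
    (hchar : (n : F) ≠ 0) (ω : F) (hω : IsPrimitiveRoot ω n)
    (h2r : 2 * r < n)
    (A : Matrix (Fin (2 * r + 1)) (Fin n) F)
    (hA : ∀ (s : Fin (2 * r + 1)) (j : Fin n), A s j =
      ω ^ ((if s.val = 0 then 0 else if s.val % 2 = 1 then (s.val + 1) / 2
        else n - s.val / 2) * j.val))
    (C : Submodule F (Fin n → F))
    (hC : C = Submodule.span F (Set.range fun s : Fin (2 * r + 1) => A s)) :
    (∀ x ∈ C, (∀ c ∈ C, ∑ k : Fin n, x k * c k = 0) → x = 0) ∧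
      ∀ v : Fin (2 * r + 1) → F, v ≠ 0 →
        n - 2 * r ≤ hammingNorm (Matrix.vecMul v A) := by
  obtain rfl : A = fourierRows ω n r := by ext s j; exact hA s j
  subst hC
  refine ⟨fun x hx horth => ?_, fun v hv => le_hammingNorm_vecMul_fourierRows hω h2r hv⟩
  exact eq_zero_of_mem_span_rows_of_isUnit_mul_transpose
    (isUnit_fourierRows_mul_transpose hchar hω h2r) hx
    fun s => horth _ (Submodule.subset_span ⟨s, rfl⟩)

/-- The code spanned by the `2r+1` Fourier rows `e_0, e_1, e_{n-1}, e_2, e_{n-2}, …,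
e_r, e_{n-r}` (with `2r < n`) is LCD (`C ∩ C^⊥ = 0`) and every nonzero codeword has
Hamming weight at least `n - 2r`; it is an LCD MDS `[n, 2r+1, n-2r]` code. -/
theorem stmt8 (F : Type*) [Field F] [DecidableEq F] (n r : ℕ) (hn : 0 < n)
    (hchar : (n : F) ≠ 0) (ω : F) (hω : IsPrimitiveRoot ω n)
    (hr : 1 ≤ r) (h2r : 2 * r < n)
    (A : Matrix (Fin (2 * r + 1)) (Fin n) F)
    (hA : ∀ (s : Fin (2 * r + 1)) (j : Fin n), A s j =
      ω ^ ((if s.val = 0 then 0 else if s.val % 2 = 1 then (s.val + 1) / 2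
        else n - s.val / 2) * j.val))
    (C : Submodule F (Fin n → F))
    (hC : C = Submodule.span F (Set.range fun s : Fin (2 * r + 1) => A s)) :
    (∀ x ∈ C, (∀ c ∈ C, ∑ k : Fin n, x k * c k = 0) → x = 0) ∧
      ∀ v : Fin (2 * r + 1) → F, v ≠ 0 →
        n - 2 * r ≤ hammingNorm (Matrix.vecMul v A) :=
  stmt8_general F n r hchar ω hω h2r A hA C hC
end

section
/- Let F be a field, n a positive integer whose image in F is nonzero, ω ∈ F a primitive n-th root of unity, and e_0,…,e_{n−1} the rows of the Fourier matrix F_n. Let r > ⌊n/2⌋, let A be the r×n matrix with rows e_0, e_1, …, e_{r−1}, and let B be the r×n matrix whose first 2r−n rows are zero and whose last n−r rows are e_r, e_{r+1}, …, e_{n−1}. Then for every nonzero vector P ∈ F^r, wt(PA) + wt(PB) ≥ 2(n−r) + 1; that is, the polynomial codeword P(A + Bz) has weight at least 2(n−r)+1. -/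
/-!
Write `x_j = ω ^ j`. The `j`-th entry of `PA` is `f(x_j)` for `f = ∑ P_s X^s`, and the `j`-th
entry of `PB` is `x_j^(n-r) h(x_j)`, where `h` keeps only the terms of `f` of degree `≥ 2r - n`.
The `x_j` are `n` distinct points, so a nonzero polynomial of degree `< m` vanishes at fewer than
`m` of them. If `h = 0`, then `f` has degree `< 2r - n` and `wt(PA) ≥ 2(n - r) + 1`; otherwise
`f` and `h` are nonzero of degree `< r`, and each of `PA`, `PB` has weight `≥ n - r + 1`.
-/

open Polynomial Matrix Finset Function

namespace Polynomial

variable {R : Type*}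

theorem card_sub_natDegree_le_hammingNorm_eval [CommRing R] [IsDomain R] [DecidableEq R]
    {ι : Type*} [Fintype ι] {x : ι → R} (hx : Injective x) {f : R[X]} (hf : f ≠ 0) :
    Fintype.card ι - f.natDegree ≤ hammingNorm fun i => f.eval (x i) := by
  have hzeros : #{i | f.eval (x i) = 0} ≤ f.natDegree :=
    calc #{i | f.eval (x i) = 0}
        = #(({i | f.eval (x i) = 0} : Finset ι).image x) := (card_image_of_injective _ hx).symm
      _ ≤ #f.roots.toFinset := card_le_card fun y hy => by
          obtain ⟨i, hi, rfl⟩ := mem_image.mp hy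
          simpa [mem_roots hf] using hi
      _ ≤ f.roots.card := Multiset.toFinset_card_le _
      _ ≤ f.natDegree := card_roots' f
  have hsplit := card_filter_add_card_filter_not (s := univ) fun i => f.eval (x i) = 0
  rw [card_univ] at hsplit
  change Fintype.card ι - f.natDegree ≤ #{i | ¬f.eval (x i) = 0}
  omega

theorem degree_ofFn_lt_of_forall_le_eq_zero [Semiring R] [DecidableEq R] {r m : ℕ}
    {v : Fin r → R} (hv : ∀ s : Fin r, m ≤ s → v s = 0) : (ofFn r v).degree < m := by
  rw [degree_lt_iff_coeff_zero]
  intro k hk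
  by_cases hkr : k < r
  · rw [ofFn_coeff_eq_val_of_lt _ hkr]
    exact hv _ hk
  · exact ofFn_coeff_eq_zero_of_ge _ (not_lt.mp hkr)

theorem card_add_one_sub_le_hammingNorm_eval_ofFn [CommRing R] [IsDomain R] [DecidableEq R]
    {ι : Type*} [Fintype ι] {x : ι → R} (hx : Injective x) {r m : ℕ} {v : Fin r → R}
    (hv0 : v ≠ 0) (hv : ∀ s : Fin r, m ≤ s → v s = 0) :
    Fintype.card ι + 1 - m ≤ hammingNorm fun i => (ofFn r v).eval (x i) := by
  have hf : ofFn r v ≠ 0 := (map_ne_zero_iff _ (injective_ofFn r)).mpr hv0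
  have hdeg : (ofFn r v).natDegree < m :=
    (natDegree_lt_iff_degree_lt hf).mpr (degree_ofFn_lt_of_forall_le_eq_zero hv)
  have := card_sub_natDegree_le_hammingNorm_eval hx hf
  omega

theorem vecMul_of_pow_eq_eval_ofFn [CommSemiring R] [DecidableEq R] {r : ℕ} {ι : Type*}
    (v : Fin r → R) (x : ι → R) :
    v ᵥ* Matrix.of (fun (s : Fin r) j => x j ^ (s : ℕ)) = fun j => (ofFn r v).eval (x j) := by
  ext j
  simp [vecMul, dotProduct, ofFn_eq_sum_monomial, eval_finsetSum]

end Polynomial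

theorem hammingNorm_vecMul_diagonal {R : Type*} [Semiring R] [IsRightCancelMulZero R]
    [DecidableEq R] {ι : Type*} [Fintype ι] [DecidableEq ι] (v : ι → R) {c : ι → R}
    (hc : ∀ i, c i ≠ 0) : hammingNorm (v ᵥ* diagonal c) = hammingNorm v := by
  rw [show v ᵥ* diagonal c = fun i => v i * c i from funext (vecMul_diagonal v c)]
  exact hammingNorm_comp (fun i a => a * c i) (fun i => mul_left_injective₀ (hc i))
    fun i => zero_mul _

theorem stmt9_general (F : Type*) [Field F] [DecidableEq F] (n r : ℕ)
    (ω : F) (hω : IsPrimitiveRoot ω n)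
    (hrn : r ≤ n)
    (A B : Matrix (Fin r) (Fin n) F)
    (hA : ∀ (s : Fin r) (j : Fin n), A s j = ω ^ (s.val * j.val))
    (hB : ∀ (s : Fin r) (j : Fin n), B s j =
      if s.val < 2 * r - n then 0 else ω ^ ((s.val + (n - r)) * j.val)) :
    ∀ P : Fin r → F, P ≠ 0 →
      2 * (n - r) + 1 ≤
        hammingNorm (Matrix.vecMul P A) + hammingNorm (Matrix.vecMul P B) := by
  intro P hP
  set x : Fin n → F := fun j => ω ^ (j : ℕ)
  set V : Matrix (Fin r) (Fin n) F := Matrix.of fun s j => x j ^ (s : ℕ)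
  set high : Fin r → F := fun s => if (s : ℕ) < 2 * r - n then 0 else 1
  have hx : Injective x := fun i j h => Fin.ext (hω.pow_inj i.isLt j.isLt h)
  have hA' : A = V := by
    ext s j
    simp [V, x, hA, ← pow_mul, mul_comm]
  have hB' : B = diagonal high * V * diagonal fun j => x j ^ (n - r) := by
    ext s j
    simp only [hB, high, V, x, mul_diagonal, diagonal_mul, of_apply]
    split_ifs <;> ring
  have hscale : ∀ j, x j ^ (n - r) ≠ 0 := fun j =>
    pow_ne_zero _ (pow_ne_zero _ (hω.ne_zero j.pos.ne'))
  rw [hA', hB', ← vecMul_vecMul, ← vecMul_vecMul, hammingNorm_vecMul_diagonal _ hscale,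
    vecMul_of_pow_eq_eval_ofFn, vecMul_of_pow_eq_eval_ofFn]
  by_cases hlow : P ᵥ* diagonal high = 0
  · have hPlow : ∀ s : Fin r, 2 * r - n ≤ s → P s = 0 := fun s hs => by
      simpa [high, vecMul_diagonal, not_lt.mpr hs] using congrFun hlow s
    have hA_wt := card_add_one_sub_le_hammingNorm_eval_ofFn hx hP hPlow
    -- when `2 * r ≤ n` the lower bound `n + 1` is impossible, so this case cannot occur
    have hA_le : hammingNorm (fun j => (ofFn r P).eval (x j)) ≤ n :=
      (hammingNorm_le_card_fintype).trans_eq (Fintype.card_fin n)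
    rw [Fintype.card_fin] at hA_wt
    omega
  · have hdeg {v : Fin r → F} : ∀ s : Fin r, r ≤ s → v s = 0 :=
      fun s hs => absurd s.isLt hs.not_gt
    have hA_wt := card_add_one_sub_le_hammingNorm_eval_ofFn hx hP hdeg
    have hB_wt := card_add_one_sub_le_hammingNorm_eval_ofFn hx hlow hdeg
    rw [Fintype.card_fin] at hA_wt hB_wt
    omega

/-- Let `A` have rows `e_0, …, e_{r-1}` of the Fourier matrix and `B` have first `2r-n`
rows zero and last `n-r` rows `e_r, …, e_{n-1}`, with `r > ⌊n/2⌋`. Then every nonzero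
`P ∈ F^r` satisfies `wt(PA) + wt(PB) ≥ 2(n-r) + 1`. -/
theorem stmt9 (F : Type*) [Field F] [DecidableEq F] (n r : ℕ) (hn : 0 < n)
    (hchar : (n : F) ≠ 0) (ω : F) (hω : IsPrimitiveRoot ω n)
    (hr : n / 2 < r) (hrn : r ≤ n)
    (A B : Matrix (Fin r) (Fin n) F)
    (hA : ∀ (s : Fin r) (j : Fin n), A s j = ω ^ (s.val * j.val))
    (hB : ∀ (s : Fin r) (j : Fin n), B s j =
      if s.val < 2 * r - n then 0 else ω ^ ((s.val + (n - r)) * j.val)) :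
    ∀ P : Fin r → F, P ≠ 0 →
      2 * (n - r) + 1 ≤
        hammingNorm (Matrix.vecMul P A) + hammingNorm (Matrix.vecMul P B) :=
  stmt9_general F n r ω hω hrn A B hA hB
end

section
/- Let F be a field, n a positive integer whose image in F is nonzero, ω ∈ F a primitive n-th root of unity, and e_0,…,e_{n−1} the rows of the Fourier matrix F_n, indices read modulo n. Let r > ⌊n/2⌋ and let k be an integer with gcd(k, n) = 1. Let A be the r×n matrix whose rows are e_a, e_{a+k}, …, e_{a+(r−1)k} (r rows in arithmetic sequence with difference k) and let B be the r×n matrix whose first 2r−n rows are zero and whose last n−r rows are the remaining rows e_{a+rk}, e_{a+(r+1)k}, …, e_{a+(n−1)k} of F_n (also in arithmetic sequence with difference k). Then for every nonzero vector P ∈ F^r, wt(PA) + wt(PB) ≥ 2(n−r) + 1. -/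
/-! The points `x_j = (ω ^ k) ^ j` are `n` distinct elements of `F`, since `ω ^ k` is again a
primitive `n`-th root of unity. Writing `r = δ + m` and `n = δ + 2m` (so `δ = 2r - n`), one has
`(PA)_j = ω^(a j) Q(x_j)` with `Q = Σ_s P_s X^s`, and `(PB)_j = ω^(a j) x_j^r S(x_j)` with
`S = Σ_t P_(δ+t) X^t`. A nonzero polynomial vanishes at no more of the `x_j` than its degree.
If `S = 0`, then `deg Q < δ` and already `wt(PA) ≥ 2m + 1`; otherwise `deg Q < δ + m` and
`deg S < m` give `wt(PA) ≥ m + 1` and `wt(PB) ≥ δ + m + 1`. -/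

open Polynomial Function

section Semiring

variable {R : Type*} [Semiring R] [DecidableEq R]

theorem eval_ofFn {m : ℕ} (p : Fin m → R) (y : R) :
    (ofFn m p).eval y = ∑ s, p s * y ^ (s : ℕ) := by
  simp [ofFn_eq_sum_monomial, eval_finsetSum]

theorem natDegree_ofFn_lt_of_forall_le {m d : ℕ} {p : Fin m → R}
    (hp : ∀ s : Fin m, d ≤ s → p s = 0) (hd : ofFn m p ≠ 0) : (ofFn m p).natDegree < d := by
  by_contra! hle
  refine hd (leadingCoeff_eq_zero.mp ?_)
  by_cases hm : (ofFn m p).natDegree < m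
  · rw [leadingCoeff, ofFn_coeff_eq_val_of_lt p hm]
    exact hp _ hle
  · exact ofFn_coeff_eq_zero_of_ge p (not_lt.mp hm)

end Semiring

section CommSemiring

variable {R : Type*} [CommSemiring R] [DecidableEq R] {ι : Type*}

theorem vecMul_eq_mul_eval_ofFn {m : ℕ} {M : Matrix (Fin m) ι R} {c x : ι → R}
    (hM : ∀ s j, M s j = c j * x j ^ s.val) (P : Fin m → R) (j : ι) :
    Matrix.vecMul P M j = c j * (ofFn m P).eval (x j) := by
  simp only [Matrix.vecMul, dotProduct, hM, eval_ofFn, Finset.mul_sum]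
  exact Finset.sum_congr rfl fun _ _ => by ring

theorem vecMul_eq_mul_eval_ofFn_natAdd {δ m : ℕ} {M : Matrix (Fin (δ + m)) ι R} {c x : ι → R}
    (hlow : ∀ i j, M (Fin.castAdd m i) j = 0)
    (hhigh : ∀ t j, M (Fin.natAdd δ t) j = c j * x j ^ t.val) (P : Fin (δ + m) → R) (j : ι) :
    Matrix.vecMul P M j = c j * (ofFn m fun t => P (Fin.natAdd δ t)).eval (x j) := by
  simp only [Matrix.vecMul, dotProduct, Fin.sum_univ_add, hlow, hhigh, mul_zero,
    Finset.sum_const_zero, zero_add, eval_ofFn, Finset.mul_sum]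
  exact Finset.sum_congr rfl fun _ _ => by ring

end CommSemiring

theorem hammingNorm_mul_left {ι M₀ : Type*} [Fintype ι] [MonoidWithZero M₀]
    [IsCancelMulZero M₀] [DecidableEq M₀] {c : ι → M₀} (hc : ∀ i, c i ≠ 0) (v : ι → M₀) :
    hammingNorm (fun i => c i * v i) = hammingNorm v :=
  hammingNorm_comp (fun i x => c i * x) (fun i => mul_right_injective₀ (hc i))
    (fun _ => mul_zero _)

section Domain

variable {R : Type*} [CommRing R] [IsDomain R] [DecidableEq R] {ι : Type*} [Fintype ι]

theorem card_sub_natDegree_le_hammingNorm_eval {Q : R[X]} (hQ : Q ≠ 0) {x : ι → R}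
    (hx : Injective x) :
    Fintype.card ι - Q.natDegree ≤ hammingNorm (fun i => Q.eval (x i)) := by
  have hroots : (Finset.univ.filter fun i => Q.eval (x i) = 0).card ≤ Q.natDegree :=
    calc (Finset.univ.filter fun i => Q.eval (x i) = 0).card
        ≤ Q.roots.toFinset.card :=
          Finset.card_le_card_of_injOn x (fun _ hi =>
            Multiset.mem_toFinset.mpr ((mem_roots hQ).mpr (Finset.mem_filter.mp hi).2)) hx.injOn
      _ ≤ Q.natDegree := (Multiset.toFinset_card_le _).trans (card_roots' Q)
  have hsplit := Finset.card_filter_add_card_filter_not (s := Finset.univ)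
    (fun i => Q.eval (x i) = 0)
  rw [Finset.card_univ] at hsplit
  simp only [hammingNorm, ne_eq]
  omega

theorem two_mul_add_one_le_hammingNorm_eval_add {δ m : ℕ} {p : Fin (δ + m) → R} (hp : p ≠ 0)
    {x : ι → R} (hx : Injective x) (hι : Fintype.card ι = δ + m + m) :
    2 * m + 1 ≤ hammingNorm (fun i => (ofFn _ p).eval (x i)) +
      hammingNorm (fun i => (ofFn m fun t => p (Fin.natAdd δ t)).eval (x i)) := by
  have hP : ofFn _ p ≠ 0 := (map_ne_zero_iff _ (injective_ofFn _)).mpr hp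
  have hwP := card_sub_natDegree_le_hammingNorm_eval hP hx
  by_cases hhigh : (fun t => p (Fin.natAdd δ t)) = 0
  · have hdeg : (ofFn _ p).natDegree < δ := by
      refine natDegree_ofFn_lt_of_forall_le (fun s hs => ?_) hP
      have hs' : s = Fin.natAdd δ ⟨s - δ, by omega⟩ := Fin.ext (Nat.add_sub_cancel' hs).symm
      rw [hs']
      exact congrFun hhigh _
    omega
  · have hH : ofFn m (fun t => p (Fin.natAdd δ t)) ≠ 0 :=
      (map_ne_zero_iff _ (injective_ofFn _)).mpr hhigh
    have hm : m ≠ 0 := ne_zero_of_ofFn_ne_zero hH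
    have hdegP := ofFn_natDegree_lt (by omega) p
    have hdegH := ofFn_natDegree_lt (by omega) (fun t => p (Fin.natAdd δ t))
    have hwH := card_sub_natDegree_le_hammingNorm_eval hH hx
    omega

end Domain

theorem zpow_add_natCast_mul_mul {G₀ : Type*} [GroupWithZero G₀] {ω : G₀} (hω : ω ≠ 0)
    (a k : ℤ) (e j : ℕ) : ω ^ ((a + e * k) * j) = ω ^ (a * j) * ((ω ^ k) ^ j) ^ e := by
  rw [← zpow_natCast, ← zpow_natCast, ← zpow_mul, ← zpow_mul, ← zpow_add₀ hω]
  ring_nf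

theorem stmt10_general (F : Type*) [Field F] [DecidableEq F] (n r : ℕ)
    (ω : F) (hω : IsPrimitiveRoot ω n)
    (hr : n / 2 < r) (hrn : r ≤ n) (a k : ℤ) (hk : Int.gcd k n = 1)
    (A B : Matrix (Fin r) (Fin n) F)
    (hA : ∀ (s : Fin r) (j : Fin n),
      A s j = ω ^ ((a + (s.val : ℤ) * k) * (j.val : ℤ)))
    (hB : ∀ (s : Fin r) (j : Fin n), B s j =
      if s.val < 2 * r - n then 0
      else ω ^ ((a + ((s.val : ℤ) + (n : ℤ) - (r : ℤ)) * k) * (j.val : ℤ))) :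
    ∀ P : Fin r → F, P ≠ 0 →
      2 * (n - r) + 1 ≤
        hammingNorm (Matrix.vecMul P A) + hammingNorm (Matrix.vecMul P B) := by
  intro P hP
  obtain ⟨δ, m, rfl, rfl⟩ : ∃ δ m, r = δ + m ∧ n = δ + m + m :=
    ⟨2 * r - n, n - r, by omega, by omega⟩
  have hω0 : ω ≠ 0 := hω.ne_zero (by omega)
  set x : Fin (δ + m + m) → F := fun j => (ω ^ k) ^ j.val
  have hx : Injective x := fun i j h => Fin.ext ((hω.zpow_of_gcd_eq_one k hk).pow_inj i.2 j.2 h)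
  have hvA := vecMul_eq_mul_eval_ofFn (M := A) (c := fun j => ω ^ (a * j.val)) (x := x)
    (fun s j => by rw [hA, zpow_add_natCast_mul_mul hω0]) P
  have hvB := vecMul_eq_mul_eval_ofFn_natAdd (M := B)
    (c := fun j => ω ^ (a * j.val) * x j ^ (δ + m))
    (x := x) (fun i j => by rw [hB, if_pos (by rw [Fin.val_castAdd]; omega)])
    (fun t j => by
      rw [hB, if_neg (by rw [Fin.val_natAdd]; omega), mul_assoc, ← pow_add,
        ← zpow_add_natCast_mul_mul hω0]
      congr 1
      push_cast [Fin.val_natAdd]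
      ring) P
  rw [funext hvA, funext hvB, hammingNorm_mul_left (fun _ => by positivity),
    hammingNorm_mul_left (fun _ => by positivity)]
  have := two_mul_add_one_le_hammingNorm_eval_add hP hx (Fintype.card_fin _)
  omega

/-- Generalisation of the weight lemma to rows in arithmetic progression with difference
`k`, `gcd(k,n)=1`: with `A` the rows `e_a, e_{a+k}, …, e_{a+(r-1)k}` and `B` having first
`2r-n` rows zero and last `n-r` rows `e_{a+rk}, …, e_{a+(n-1)k}`, every nonzero `P ∈ F^r`
satisfies `wt(PA) + wt(PB) ≥ 2(n-r) + 1`. -/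
theorem stmt10 (F : Type*) [Field F] [DecidableEq F] (n r : ℕ) (hn : 0 < n)
    (hchar : (n : F) ≠ 0) (ω : F) (hω : IsPrimitiveRoot ω n)
    (hr : n / 2 < r) (hrn : r ≤ n) (a k : ℤ) (hk : Int.gcd k n = 1)
    (A B : Matrix (Fin r) (Fin n) F)
    (hA : ∀ (s : Fin r) (j : Fin n),
      A s j = ω ^ ((a + (s.val : ℤ) * k) * (j.val : ℤ)))
    (hB : ∀ (s : Fin r) (j : Fin n), B s j =
      if s.val < 2 * r - n then 0
      else ω ^ ((a + ((s.val : ℤ) + (n : ℤ) - (r : ℤ)) * k) * (j.val : ℤ))) :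
    ∀ P : Fin r → F, P ≠ 0 →
      2 * (n - r) + 1 ≤
        hammingNorm (Matrix.vecMul P A) + hammingNorm (Matrix.vecMul P B) :=
  stmt10_general F n r ω hω hr hrn a k hk A B hA hB
end

section
/- Let F be a field, n a positive integer whose image in F is nonzero, ω ∈ F a primitive n-th root of unity, e_0,…,e_{n−1} the rows of the Fourier matrix F_n, and f_j = (1, ω^{−j}, …, ω^{−(n−1)j})^T. Let r > ⌊n/2⌋, A the r×n matrix with rows e_0,…,e_{r−1}, and B the r×n matrix whose first 2r−n rows are zero and whose last n−r rows are e_r,…,e_{n−1}. Let K be the constant n×r matrix whose columns are n^{−1}f_0, n^{−1}f_1, …, n^{−1}f_{r−1}. Then (A + Bz)·K = I_r, the r×r identity matrix over F[z]; thus G[z] = A + Bz has a right polynomial inverse and generates a non-catastrophic convolutional code. -/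
/-!
Writing `G[z] = A + Bz` with constant matrices `A`, `B`, it suffices that `A K = I` and `B K = 0`.
Both follow from the orthogonality `e_a · f_b = n δ_ab` for `a, b < n`, which is a geometric
sum of the `n`-th root of unity `ω^a / ω^b`. A nonzero row of `B` is `e_{s+n-r}` with
`s + n - r ≥ r`, so it is orthogonal to every column `f_t`, `t < r`, of `K`.
-/

open Polynomial

theorem Matrix.add_X_smul_map_C_mul_map_C_eq_one {m n R : Type*} [Fintype n] [DecidableEq m]
    [CommRing R] {A B : Matrix m n R} {K : Matrix n m R} (hA : A * K = 1) (hB : B * K = 0) :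
    (A.map (C : R →+* R[X]) + (X : R[X]) • B.map C) * K.map C = 1 := by
  rw [Matrix.add_mul, Matrix.smul_mul, ← Matrix.map_mul, ← Matrix.map_mul, hA, hB,
    Matrix.map_one _ C_0 C_1, Matrix.map_zero _ C_0, smul_zero, add_zero]

theorem geom_sum_eq_zero_of_pow_eq_one {R : Type*} [CommRing R] [IsDomain R] {x : R} {n : ℕ}
    (hx : x ^ n = 1) (hx1 : x ≠ 1) : ∑ i ∈ Finset.range n, x ^ i = 0 := by
  refine eq_zero_of_ne_zero_of_mul_left_eq_zero (sub_ne_zero_of_ne hx1.symm) ?_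
  rw [mul_neg_geom_sum, hx, sub_self]

theorem IsPrimitiveRoot.sum_pow_mul_mul_inv_pow_mul {F : Type*} [Field F] {n : ℕ} {ω : F}
    (hω : IsPrimitiveRoot ω n) {a b : ℕ} (ha : a < n) (hb : b < n) :
    ∑ j : Fin n, ω ^ (a * j.val) * ω⁻¹ ^ (j.val * b) = if a = b then (n : F) else 0 := by
  have hω0 : ω ≠ 0 := hω.ne_zero (by omega)
  have hterm (j : ℕ) : ω ^ (a * j) * ω⁻¹ ^ (j * b) = (ω ^ a / ω ^ b) ^ j := by
    rw [div_pow, ← pow_mul, ← pow_mul, inv_pow, div_eq_mul_inv, mul_comm b]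
  simp_rw [hterm]
  split_ifs with hab
  · simp [hab, div_self (pow_ne_zero b hω0)]
  · refine (Fin.sum_univ_eq_sum_range (fun j => (ω ^ a / ω ^ b) ^ j) n).trans ?_
    refine geom_sum_eq_zero_of_pow_eq_one ?_ fun h => hab (hω.pow_inj ha hb ?_)
    · rw [div_pow, ← pow_mul, ← pow_mul, mul_comm a, mul_comm b, pow_mul, pow_mul,
        hω.pow_eq_one, one_pow, one_pow, div_one]
    · rwa [div_eq_one_iff_eq (pow_ne_zero _ hω0)] at h

theorem stmt12_general (F : Type*) [Field F] (n r : ℕ)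
    (hchar : (n : F) ≠ 0) (ω : F) (hω : IsPrimitiveRoot ω n)
    (hrn : r ≤ n)
    (G : Matrix (Fin r) (Fin n) (Polynomial F))
    (hG : ∀ (s : Fin r) (j : Fin n), G s j =
      Polynomial.C (ω ^ (s.val * j.val)) +
        Polynomial.C (if s.val < 2 * r - n then 0
          else ω ^ ((s.val + (n - r)) * j.val)) * Polynomial.X)
    (K : Matrix (Fin n) (Fin r) (Polynomial F))
    (hK : ∀ (j : Fin n) (s : Fin r),
      K j s = Polynomial.C ((n : F)⁻¹ * ω⁻¹ ^ (j.val * s.val))) :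
    G * K = 1 := by
  set A : Matrix (Fin r) (Fin n) F := .of fun s j => ω ^ (s.val * j.val)
  set B : Matrix (Fin r) (Fin n) F := .of fun s j =>
    if s.val < 2 * r - n then 0 else ω ^ ((s.val + (n - r)) * j.val)
  set K₀ : Matrix (Fin n) (Fin r) F := .of fun j t => (n : F)⁻¹ * ω⁻¹ ^ (j.val * t.val)
  have hGAB : G = A.map (C : F →+* F[X]) + (X : F[X]) • B.map C := by
    ext1 s j
    simp [hG, A, B, mul_comm X]
  have hKK₀ : K = K₀.map C := by
    ext1 j t
    simp [hK, K₀]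
  have hAK : A * K₀ = 1 := by
    ext s t
    simp only [A, K₀, Matrix.mul_apply, Matrix.of_apply, mul_left_comm _ (n : F)⁻¹,
      ← Finset.mul_sum]
    rw [hω.sum_pow_mul_mul_inv_pow_mul (s.2.trans_le hrn) (t.2.trans_le hrn), Matrix.one_apply]
    split_ifs <;> simp_all [Fin.ext_iff]
  have hBK : B * K₀ = 0 := by
    ext s t
    simp only [B, K₀, Matrix.mul_apply, Matrix.of_apply, Matrix.zero_apply]
    split_ifs with hs
    · simp
    · simp only [mul_left_comm _ (n : F)⁻¹, ← Finset.mul_sum]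
      rw [hω.sum_pow_mul_mul_inv_pow_mul (by omega) (t.2.trans_le hrn), if_neg (by omega),
        mul_zero]
  rw [hGAB, hKK₀]
  exact Matrix.add_X_smul_map_C_mul_map_C_eq_one hAK hBK

/-- The convolutional generator `G[z] = A + Bz` has a right polynomial inverse: the
constant matrix `K` with columns `n⁻¹ f_0, …, n⁻¹ f_{r-1}` satisfies `G[z]·K = I_r`, so
the code generated is non-catastrophic. -/
theorem stmt12 (F : Type*) [Field F] (n r : ℕ) (hn : 0 < n)
    (hchar : (n : F) ≠ 0) (ω : F) (hω : IsPrimitiveRoot ω n)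
    (hr : n / 2 < r) (hrn : r ≤ n)
    (G : Matrix (Fin r) (Fin n) (Polynomial F))
    (hG : ∀ (s : Fin r) (j : Fin n), G s j =
      Polynomial.C (ω ^ (s.val * j.val)) +
        Polynomial.C (if s.val < 2 * r - n then 0
          else ω ^ ((s.val + (n - r)) * j.val)) * Polynomial.X)
    (K : Matrix (Fin n) (Fin r) (Polynomial F))
    (hK : ∀ (j : Fin n) (s : Fin r),
      K j s = Polynomial.C ((n : F)⁻¹ * ω⁻¹ ^ (j.val * s.val))) :
    G * K = 1 :=
  stmt12_general F n r hchar ω hω hrn G hG K hK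
end

section
/- Let F be a field and let A, B, C, D be matrices over F of the same size r×n such that the rows of A are linearly independent and the rows of C are linearly independent. Suppose the row space of A intersects the row space of C trivially, and the row space of B intersects the row space of D trivially. Then, for either choice of sign, the F[z]-submodule of (F[z])^n generated by the rows of A + Bz intersects trivially the F[z]-submodule generated by the rows of C ± Dz: if P[z](A+Bz) = Q[z](C ± Dz) for row vectors P[z], Q[z] ∈ (F[z])^r, then P[z](A+Bz) = 0. -/
/-!
Compare the coefficients of `z ^ k` in `P (A + B z) = Q (C ± D z)`:
`P_k A + P_(k-1) B = Q_k C ± Q_(k-1) D`. If all lower coefficients of `P` and `Q` already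
vanish, this reads `P_k A = Q_k C`, a vector in the trivial intersection of the row spaces of
`A` and `C`; independence of the rows then forces `P_k = Q_k = 0`. By strong induction on `k`,
`P = Q = 0`.
-/

open Polynomial

namespace Matrix

variable {R : Type*} {m m' n : Type*} [Fintype m] [Fintype m']

theorem eq_zero_of_vecMul_eq_vecMul [Ring R] {M : Matrix m n R} {N : Matrix m' n R}
    (hM : LinearIndependent R (fun i => M i)) (hN : LinearIndependent R (fun i => N i))
    (hMN : Disjoint (Submodule.span R (Set.range fun i => M i))
      (Submodule.span R (Set.range fun i => N i)))
    {u : m → R} {v : m' → R} (huv : u ᵥ* M = v ᵥ* N) : u = 0 ∧ v = 0 := by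
  have hM0 : u ᵥ* M = 0 := by
    refine Submodule.disjoint_def.mp hMN _ ?_ ?_
    · rw [vecMul_eq_sum]
      exact Submodule.sum_smul_mem _ _ fun i _ => Submodule.subset_span ⟨i, rfl⟩
    · rw [huv, vecMul_eq_sum]
      exact Submodule.sum_smul_mem _ _ fun i _ => Submodule.subset_span ⟨i, rfl⟩
  have hN0 : v ᵥ* N = 0 := huv ▸ hM0
  rw [vecMul_eq_sum] at hM0 hN0
  exact ⟨funext (Fintype.linearIndependent_iff.mp hM u hM0),
    funext (Fintype.linearIndependent_iff.mp hN v hN0)⟩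

theorem coeff_vecMul_pencil [Semiring R] {M₀ M₁ : Matrix m n R} {G : Matrix m n R[X]}
    (hG : ∀ i j, G i j = C (M₀ i j) + C (M₁ i j) * X) {P : m → R[X]} {k : ℕ}
    (hP : ∀ i, ∀ l < k, (P i).coeff l = 0) :
    (fun j => ((P ᵥ* G) j).coeff k) = (fun i => (P i).coeff k) ᵥ* M₀ := by
  have hM₁ : ∀ i (b : R), (P i * C b * X).coeff k = 0 := by
    intro i b
    cases k with
    | zero => exact coeff_mul_X_zero _
    | succ k => rw [coeff_mul_X, coeff_mul_C, hP i k k.lt_succ_self, zero_mul]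
  ext j
  simp only [vecMul, dotProduct, finsetSum_coeff, hG, mul_add, coeff_add, coeff_mul_C,
    ← mul_assoc, hM₁, add_zero]

theorem eq_zero_of_vecMul_pencil_eq_vecMul_pencil [Ring R]
    {M₀ M₁ : Matrix m n R} {N₀ N₁ : Matrix m' n R} {G : Matrix m n R[X]} {H : Matrix m' n R[X]}
    (hG : ∀ i j, G i j = C (M₀ i j) + C (M₁ i j) * X)
    (hH : ∀ i j, H i j = C (N₀ i j) + C (N₁ i j) * X)
    (hM₀ : LinearIndependent R (fun i => M₀ i)) (hN₀ : LinearIndependent R (fun i => N₀ i))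
    (hMN₀ : Disjoint (Submodule.span R (Set.range fun i => M₀ i))
      (Submodule.span R (Set.range fun i => N₀ i)))
    {P : m → R[X]} {Q : m' → R[X]} (h : P ᵥ* G = Q ᵥ* H) : P = 0 ∧ Q = 0 := by
  have hcoeff : ∀ k, (fun i => (P i).coeff k) = 0 ∧ (fun i => (Q i).coeff k) = 0 := by
    intro k
    induction k using Nat.strong_induction_on with
    | _ k ih =>
      refine eq_zero_of_vecMul_eq_vecMul hM₀ hN₀ hMN₀ ?_
      rw [← coeff_vecMul_pencil hG fun i l hl => congrFun (ih l hl).1 i,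
        ← coeff_vecMul_pencil hH fun i l hl => congrFun (ih l hl).2 i, h]
  exact ⟨funext fun i => Polynomial.ext fun k => congrFun (hcoeff k).1 i,
    funext fun i => Polynomial.ext fun k => congrFun (hcoeff k).2 i⟩

end Matrix

theorem stmt14_general (F : Type*) [Field F] (r n : ℕ)
    (A B C D : Matrix (Fin r) (Fin n) F)
    (hA : LinearIndependent F (fun i : Fin r => A i))
    (hC : LinearIndependent F (fun i : Fin r => C i))
    (hAC : Submodule.span F (Set.range fun i : Fin r => A i) ⊓
      Submodule.span F (Set.range fun i : Fin r => C i) = ⊥)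
    (ε : F)
    (GA GC : Matrix (Fin r) (Fin n) (Polynomial F))
    (hGA : ∀ (i : Fin r) (j : Fin n),
      GA i j = Polynomial.C (A i j) + Polynomial.C (B i j) * Polynomial.X)
    (hGC : ∀ (i : Fin r) (j : Fin n),
      GC i j = Polynomial.C (C i j) + Polynomial.C (ε * D i j) * Polynomial.X)
    (P Q : Fin r → Polynomial F)
    (h : Matrix.vecMul P GA = Matrix.vecMul Q GC) :
    Matrix.vecMul P GA = 0 := by
  rw [(Matrix.eq_zero_of_vecMul_pencil_eq_vecMul_pencil (N₁ := fun i j => ε * D i j) hGA hGC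
    hA hC (disjoint_iff.mpr hAC) h).1, Matrix.zero_vecMul]

/-- If the row space of `A` meets the row space of `C` trivially and the row space of `B`
meets the row space of `D` trivially (rows of `A` and of `C` linearly independent), then
the `F[z]`-module generated by the rows of `A + Bz` meets that generated by the rows of
`C ± Dz` trivially. -/
theorem stmt14 (F : Type*) [Field F] (r n : ℕ)
    (A B C D : Matrix (Fin r) (Fin n) F)
    (hA : LinearIndependent F (fun i : Fin r => A i))
    (hC : LinearIndependent F (fun i : Fin r => C i))
    (hAC : Submodule.span F (Set.range fun i : Fin r => A i) ⊓
      Submodule.span F (Set.range fun i : Fin r => C i) = ⊥)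
    (hBD : Submodule.span F (Set.range fun i : Fin r => B i) ⊓
      Submodule.span F (Set.range fun i : Fin r => D i) = ⊥)
    (ε : F) (hε : ε = 1 ∨ ε = -1)
    (GA GC : Matrix (Fin r) (Fin n) (Polynomial F))
    (hGA : ∀ (i : Fin r) (j : Fin n),
      GA i j = Polynomial.C (A i j) + Polynomial.C (B i j) * Polynomial.X)
    (hGC : ∀ (i : Fin r) (j : Fin n),
      GC i j = Polynomial.C (C i j) + Polynomial.C (ε * D i j) * Polynomial.X)
    (P Q : Fin r → Polynomial F)
    (h : Matrix.vecMul P GA = Matrix.vecMul Q GC) :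
    Matrix.vecMul P GA = 0 :=
  stmt14_general F r n A B C D hA hC hAC ε GA GC hGA hGC P Q h
end

section
/- Let F be a field, n a positive integer whose image in F is nonzero, ω ∈ F a primitive n-th root of unity, and e_0,…,e_{n−1} the rows of the Fourier matrix F_n. Let r > ⌊n/2⌋, A the r×n matrix with rows e_0,…,e_{r−1}, and B the r×n matrix whose first 2r−n rows are zero and whose last n−r rows are e_r,…,e_{n−1}. Let M be the (n−r)×n matrix with rows e_{n−1}, e_{n−2}, …, e_r and N the (n−r)×n matrix with rows e_{n−r}, e_{n−r−1}, …, e_1 (so M + Nz generates the module-theoretic dual of the convolutional code generated by A + Bz). Then the F[z]-submodule of (F[z])^n generated by the rows of A + Bz intersects trivially the F[z]-submodule generated by the rows of M + Nz; that is, the convolutional code generated by G[z] = A + Bz is a linear complementary dual (LCD) convolutional code. -/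
open Polynomial Finset Matrix

/-!
The Fourier rows `e_0, …, e_{n-1}` are the rows of the Vandermonde matrix of the distinct powers
of `ω`, so they are linearly independent over `F[X]` and two codewords can be compared
coefficient by coefficient. With `m = n - r < r`, the coefficients give `P_0 = 0`, `P_k = 0` for
`m < k < r`, `P_k = X Q_{m-k}` for `1 ≤ k ≤ m` and `Q_c = X P_{r-1-c}` for `c < m`. Hence each
`P_k` is zero or `X² P_{k'}` for some `k'`, so every `P_k` is divisible by all powers of `X` and
`P = 0`.
-/

theorem IsPrimitiveRoot.eq_of_sum_mul_pow_eq {R : Type*} [CommRing R] [IsDomain R] {ω : R}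
    {n : ℕ} (hω : IsPrimitiveRoot ω n) {a b : ℕ → R}
    (h : ∀ j : Fin n, ∑ k ∈ range n, a k * ω ^ (k * j) = ∑ k ∈ range n, b k * ω ^ (k * j))
    {k : ℕ} (hk : k < n) : a k = b k := by
  have hinj : Function.Injective fun i : Fin n => ω ^ (i : ℕ) :=
    fun i i' hii' => Fin.ext (hω.pow_inj i.isLt i'.isLt hii')
  have hzero := Matrix.eq_zero_of_forall_pow_sum_mul_pow_eq_zero hinj
    (v := fun i => a i - b i) fun j => by
      simp only [← pow_mul, sub_mul]
      rw [Fin.sum_univ_eq_sum_range (fun i => a i * ω ^ (i * j) - b i * ω ^ (i * j)),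
        sum_sub_distrib, h, sub_self]
  exact sub_eq_zero.mp (congrFun hzero ⟨k, hk⟩)

theorem Polynomial.eq_zero_of_forall_exists_X_mul_dvd {R ι : Type*} [Semiring R]
    {f : ι → R[X]} (h : ∀ i, ∃ j, X * f j ∣ f i) (i : ι) : f i = 0 := by
  have hdvd : ∀ d i, X ^ d ∣ f i := by
    intro d
    induction d with
    | zero => simp
    | succ d ih =>
      intro i
      obtain ⟨j, hj⟩ := h i
      rw [pow_succ']
      exact (mul_dvd_mul_left X (ih j)).trans hj
  ext d
  exact X_pow_dvd_iff.mp (hdvd (d + 1) i) d d.lt_succ_self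

section

variable {F : Type*} [Field F]

noncomputable def lcdGenerator (ω : F) (n r : ℕ) : Matrix (Fin r) (Fin n) F[X] :=
  Matrix.of fun s j => C (ω ^ (s.val * j.val)) +
    C (if s.val < 2 * r - n then 0 else ω ^ ((s.val + (n - r)) * j.val)) * X

noncomputable def lcdDualGenerator (ω : F) (n r : ℕ) : Matrix (Fin (n - r)) (Fin n) F[X] :=
  Matrix.of fun c j => C (ω ^ ((n - 1 - c.val) * j.val)) + C (ω ^ ((n - r - c.val) * j.val)) * X

theorem Fin.extend_val_of_le {M : Type*} [Zero M] {r k : ℕ} (P : Fin r → M) (hk : r ≤ k) :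
    Function.extend Fin.val P 0 k = 0 :=
  Function.extend_apply' _ _ _ fun ⟨s, hs⟩ => by omega

theorem vecMul_lcdGenerator_apply (ω : F) {n r : ℕ} (hrn : r ≤ n) (hnr : n ≤ 2 * r)
    (P : Fin r → F[X]) (j : Fin n) :
    (P ᵥ* lcdGenerator ω n r) j = ∑ k ∈ range n,
      (Function.extend Fin.val P 0 k +
        X * if r ≤ k then Function.extend Fin.val P 0 (k - (n - r)) else 0) * C ω ^ (k * j) := by
  set p := Function.extend Fin.val P 0
  have hp : ∀ k, r ≤ k → p k = 0 := fun k => Fin.extend_val_of_le P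
  obtain ⟨m, rfl⟩ := Nat.exists_eq_add_of_le hrn
  obtain ⟨a, rfl⟩ : ∃ a, r = a + m := ⟨r - m, by omega⟩
  calc (P ᵥ* lcdGenerator ω (a + m + m) (a + m)) j
      = ∑ s ∈ range (a + m), (p s * C ω ^ (s * j.val) +
          X * if s < a then 0 else p s * C ω ^ ((s + m) * j)) := by
        rw [vecMul, dotProduct, ← Fin.sum_univ_eq_sum_range]
        refine sum_congr rfl fun s _ => ?_
        simp only [lcdGenerator, Matrix.of_apply, p, Fin.val_injective.extend_apply,
          (by omega : 2 * (a + m) - (a + m + m) = a), Nat.add_sub_cancel_left]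
        split_ifs <;> simp only [map_zero, map_pow] <;> ring
    _ = ∑ k ∈ range (a + m + m), p k * C ω ^ (k * j) +
          X * ∑ k ∈ range (a + m + m), (if a + m ≤ k then p (k - m) else 0) * C ω ^ (k * j) := by
        rw [sum_add_distrib, ← mul_sum]
        refine congrArg₂ (· + ·) ?_ (congrArg (X * ·) ?_)
        · symm
          rw [sum_range_add, add_eq_left]
          exact sum_eq_zero fun c _ => by rw [hp _ (by omega), zero_mul]
        · rw [sum_range_add (_ : ℕ → F[X]) a m, sum_range_add (_ : ℕ → F[X]) (a + m) m]
          congr 1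
          · rw [sum_eq_zero fun s hs => if_pos (mem_range.mp hs)]
            refine (sum_eq_zero fun k hk => ?_).symm
            rw [if_neg (by simp only [mem_range] at hk; omega), zero_mul]
          · refine sum_congr rfl fun c _ => ?_
            rw [if_neg (by omega), if_pos (by omega), (by omega : a + m + c - m = a + c),
              (by omega : a + c + m = a + m + c)]
    _ = _ := by
        simp only [Nat.add_sub_cancel_left, mul_sum, ← sum_add_distrib, add_mul, mul_assoc]

theorem vecMul_lcdDualGenerator_apply (ω : F) {n r : ℕ} (hr : 0 < r) (hrn : r ≤ n)
    (Q : Fin (n - r) → F[X]) (j : Fin n) :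
    (Q ᵥ* lcdDualGenerator ω n r) j = ∑ k ∈ range n,
      (Function.extend Fin.val Q 0 (n - 1 - k) +
        X * if k ≤ n - r then Function.extend Fin.val Q 0 (n - r - k) else 0) * C ω ^ (k * j) := by
  set q := Function.extend Fin.val Q 0
  have hq : ∀ k, n - r ≤ k → q k = 0 := fun k => Fin.extend_val_of_le Q
  have reflect : ∀ N (f : ℕ → ℕ → F[X]),
      ∑ c ∈ range N, f c (N - 1 - c) = ∑ k ∈ range N, f (N - 1 - k) k := by
    intro N f
    rw [← sum_range_reflect]
    exact sum_congr rfl fun c hc => by rw [(by simp at hc; omega : N - 1 - (N - 1 - c) = c)]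
  calc (Q ᵥ* lcdDualGenerator ω n r) j
      = ∑ c ∈ range (n - r), (q c * C ω ^ ((n - 1 - c) * j.val) +
          X * (q c * C ω ^ ((n - r - c) * j))) := by
        rw [vecMul, dotProduct, ← Fin.sum_univ_eq_sum_range]
        refine sum_congr rfl fun c _ => ?_
        simp only [lcdDualGenerator, Matrix.of_apply, q, Fin.val_injective.extend_apply, map_pow]
        ring
    _ = ∑ c ∈ range n, q c * C ω ^ ((n - 1 - c) * j.val) +
          X * ∑ c ∈ range (n - r + 1), q c * C ω ^ ((n - r + 1 - 1 - c) * j.val) := by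
        rw [sum_add_distrib, ← mul_sum, sum_range_succ, hq (n - r) le_rfl, zero_mul, add_zero,
          Nat.add_sub_cancel]
        congr 1
        exact sum_subset (range_subset_range.2 (by omega)) fun c _ hc => by
          rw [hq c (by simpa using hc), zero_mul]
    _ = ∑ k ∈ range n, q (n - 1 - k) * C ω ^ (k * j.val) +
          X * ∑ k ∈ range (n - r + 1), q (n - r + 1 - 1 - k) * C ω ^ (k * j.val) := by
        rw [reflect _ fun c k => q c * C ω ^ (k * j.val),
          reflect _ fun c k => q c * C ω ^ (k * j.val)]
    _ = _ := by
        simp only [Nat.add_sub_cancel, add_mul, sum_add_distrib, mul_assoc, ← mul_sum]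
        congr 2
        rw [← sum_subset (range_subset_range.2 (by omega : n - r + 1 ≤ n)) fun k _ hk => by
          rw [if_neg (by simp at hk; omega), zero_mul]]
        exact sum_congr rfl fun k hk => by rw [if_pos (by simp at hk; omega)]

/-- Both sides are the coefficients of the Fourier row `e_k`, with `P` and `Q` padded by zeros. -/
theorem coeff_eq_of_vecMul_lcdGenerator_eq {ω : F} {n r : ℕ} (hω : IsPrimitiveRoot ω n)
    (hr : n / 2 < r) (hrn : r ≤ n) {P : Fin r → F[X]} {Q : Fin (n - r) → F[X]}
    (h : P ᵥ* lcdGenerator ω n r = Q ᵥ* lcdDualGenerator ω n r) {k : ℕ} (hk : k < n) :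
    Function.extend Fin.val P 0 k +
        X * (if r ≤ k then Function.extend Fin.val P 0 (k - (n - r)) else 0) =
      Function.extend Fin.val Q 0 (n - 1 - k) +
        X * (if k ≤ n - r then Function.extend Fin.val Q 0 (n - r - k) else 0) := by
  apply (hω.map_of_injective C_injective).eq_of_sum_mul_pow_eq _ hk
  intro j
  rw [← vecMul_lcdGenerator_apply ω hrn (by omega), h,
    vecMul_lcdDualGenerator_apply ω (by omega) hrn]

theorem exists_X_mul_dvd_of_vecMul_lcdGenerator_eq {ω : F} {n r : ℕ}
    (hω : IsPrimitiveRoot ω n) (hr : n / 2 < r) (hrn : r ≤ n) {P : Fin r → F[X]}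
    {Q : Fin (n - r) → F[X]} (h : P ᵥ* lcdGenerator ω n r = Q ᵥ* lcdDualGenerator ω n r)
    (s : Fin r) : ∃ t, X * P t ∣ P s := by
  have E := fun k (hk : k < n) => coeff_eq_of_vecMul_lcdGenerator_eq hω hr hrn h hk
  set p := Function.extend Fin.val P 0
  set q := Function.extend Fin.val Q 0
  have hP : ∀ s : Fin r, P s = p s := fun s => (Fin.val_injective.extend_apply P 0 s).symm
  have hp : ∀ k, r ≤ k → p k = 0 := fun k => Fin.extend_val_of_le P
  have hq : ∀ k, n - r ≤ k → q k = 0 := fun k => Fin.extend_val_of_le Q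
  have hlow : ∀ k < r, p k = X * if k ≤ n - r then q (n - r - k) else 0 := fun k hk => by
    simpa [if_neg (by omega : ¬r ≤ k), hq (n - 1 - k) (by omega)] using E k (by omega)
  have hhigh : ∀ c < n - r, q c = X * p (r - 1 - c) := fun c hc => by
    have := E (n - 1 - c) (by omega)
    rw [if_pos (by omega), if_neg (by omega), hp _ (by omega),
      (by omega : n - 1 - c - (n - r) = r - 1 - c), (by omega : n - 1 - (n - 1 - c) = c)] at this
    simpa using this.symm
  by_cases hs : 1 ≤ s.val ∧ s.val ≤ n - r
  · refine ⟨⟨s + (r - 1 - (n - r)), by omega⟩, ?_⟩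
    rw [hP, hP, hlow s s.isLt, if_pos hs.2, hhigh _ (by omega),
      (by omega : r - 1 - (n - r - s) = s + (r - 1 - (n - r)))]
    exact dvd_mul_left _ _
  · refine ⟨s, ?_⟩
    rw [hP s, hlow s s.isLt, ite_eq_right_iff.mpr fun _ => hq _ (by omega), mul_zero]
    exact dvd_zero _

end

theorem stmt15_general (F : Type*) [Field F] (n r : ℕ)
    (ω : F) (hω : IsPrimitiveRoot ω n)
    (hr : n / 2 < r) (hrn : r ≤ n)
    (GA : Matrix (Fin r) (Fin n) (Polynomial F))
    (hGA : ∀ (s : Fin r) (j : Fin n), GA s j =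
      Polynomial.C (ω ^ (s.val * j.val)) +
        Polynomial.C (if s.val < 2 * r - n then 0
          else ω ^ ((s.val + (n - r)) * j.val)) * Polynomial.X)
    (GM : Matrix (Fin (n - r)) (Fin n) (Polynomial F))
    (hGM : ∀ (c : Fin (n - r)) (j : Fin n), GM c j =
      Polynomial.C (ω ^ ((n - 1 - c.val) * j.val)) +
        Polynomial.C (ω ^ ((n - r - c.val) * j.val)) * Polynomial.X) :
    ∀ (P : Fin r → Polynomial F) (Q : Fin (n - r) → Polynomial F),
      Matrix.vecMul P GA = Matrix.vecMul Q GM → Matrix.vecMul P GA = 0 := by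
  intro P Q h
  obtain rfl : GA = lcdGenerator ω n r := Matrix.ext hGA
  obtain rfl : GM = lcdDualGenerator ω n r := Matrix.ext hGM
  have hP : P = 0 := funext <| Polynomial.eq_zero_of_forall_exists_X_mul_dvd
    (exists_X_mul_dvd_of_vecMul_lcdGenerator_eq hω hr hrn h)
  rw [hP, zero_vecMul]

/-- The convolutional code generated by `G[z] = A + Bz` (`A` the first `r` Fourier rows,
`B` zero rows followed by `e_r, …, e_{n-1}`) meets trivially the code generated by
`M + Nz`, where `M` has rows `e_{n-1}, …, e_r` and `N` has rows `e_{n-r}, …, e_1`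
(the generator of the module-theoretic dual); i.e. the code is an LCD convolutional
code. -/
theorem stmt15 (F : Type*) [Field F] (n r : ℕ) (hn : 0 < n)
    (hchar : (n : F) ≠ 0) (ω : F) (hω : IsPrimitiveRoot ω n)
    (hr : n / 2 < r) (hrn : r ≤ n)
    (GA : Matrix (Fin r) (Fin n) (Polynomial F))
    (hGA : ∀ (s : Fin r) (j : Fin n), GA s j =
      Polynomial.C (ω ^ (s.val * j.val)) +
        Polynomial.C (if s.val < 2 * r - n then 0
          else ω ^ ((s.val + (n - r)) * j.val)) * Polynomial.X)
    (GM : Matrix (Fin (n - r)) (Fin n) (Polynomial F))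
    (hGM : ∀ (c : Fin (n - r)) (j : Fin n), GM c j =
      Polynomial.C (ω ^ ((n - 1 - c.val) * j.val)) +
        Polynomial.C (ω ^ ((n - r - c.val) * j.val)) * Polynomial.X) :
    ∀ (P : Fin r → Polynomial F) (Q : Fin (n - r) → Polynomial F),
      Matrix.vecMul P GA = Matrix.vecMul Q GM → Matrix.vecMul P GA = 0 :=
  stmt15_general F n r ω hω hr hrn GA hGA GM hGM
end
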